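/- arXiv:1305.3771 — 5 statements merged into one kernel-verified Lean document; each statement's English description precedes it below -/
import Mathlib

section
/- ∫_{1/2}^∞ τ³ (tanh(π √(τ² − 1/4)) − 1) dτ = −17/960. -/
/-!
The substitution `τ = √(u² + 1/4)` turns the integral into
`∫₀^∞ (u³ + u/4) (tanh (π u) - 1) du`. Expanding
`tanh x - 1 = -2 ∑ₙ (-1)ⁿ e^{-2(n+1)x}` and integrating termwise (a Mellin transform)
gives `∫₀^∞ uᵏ (tanh (π u) - 1) du = -2 k! η(k+1) / (2π)^(k+1)`, where
`η(s) = (1 - 2^(1-s)) ζ(s)` is the alternating zeta function. With `η(2) = π²/12` and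
`η(4) = 7π⁴/720` the two terms are `-7/960` and `-1/96`.
-/

open Real MeasureTheory Set
open scoped Nat

@[fun_prop]
lemma Real.continuous_tanh : Continuous tanh := by
  rw [show tanh = fun x => sinh x / cosh x from funext tanh_eq_sinh_div_cosh]
  exact continuous_sinh.div continuous_cosh fun x => (cosh_pos x).ne'

lemma tanh_sub_one_eq (x : ℝ) :
    tanh x - 1 = -2 * exp (-(2 * x)) / (1 + exp (-(2 * x))) := by
  have hx : exp (-(2 * x)) = exp (-x) * exp (-x) := by rw [← exp_add]; ring_nf
  rw [tanh_eq, hx, ← inv_mul_cancel₀ (exp_pos x).ne', exp_neg]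
  field_simp
  ring

lemma abs_tanh_sub_one_le (x : ℝ) : |tanh x - 1| ≤ 2 * exp (-(2 * x)) := by
  have hq := exp_pos (-(2 * x))
  rw [tanh_sub_one_eq, abs_div, abs_of_pos (by positivity : 0 < 1 + exp (-(2 * x))),
    div_le_iff₀ (by positivity), abs_mul, abs_of_pos hq, abs_neg, abs_two]
  nlinarith

lemma hasSum_tanh_sub_one {x : ℝ} (hx : 0 < x) :
    HasSum (fun n : ℕ => -2 * (-1) ^ n * exp (-(2 * (n + 1) * x))) (tanh x - 1) := by
  set q := exp (-(2 * x))
  have hq : ‖-q‖ < 1 := by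
    rw [norm_neg, norm_of_nonneg (exp_pos _).le, exp_lt_one_iff]; linarith
  rw [tanh_sub_one_eq, div_eq_mul_inv, ← sub_neg_eq_add 1 q]
  refine ((hasSum_geometric_of_norm_lt_one hq).mul_left (-2 * q)).congr_fun fun n => ?_
  rw [show -(2 * ((n : ℝ) + 1) * x) = (n + 1 : ℕ) * -(2 * x) by push_cast; ring, exp_nat_mul,
    neg_pow, pow_succ]
  ring

lemma hasSum_alternating_one_div_succ_pow {k : ℕ} (hk : k ≠ 0) {z : ℝ}
    (h : HasSum (fun n : ℕ => 1 / (n : ℝ) ^ k) z) :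
    HasSum (fun n : ℕ => (-1) ^ n / ((n : ℝ) + 1) ^ k) ((1 - 2 / 2 ^ k) * z) := by
  set f : ℕ → ℝ := fun n => 1 / (n : ℝ) ^ k
  have h_even : HasSum (fun m => f (2 * m)) (z / 2 ^ k) := by
    refine (h.div_const _).congr_fun fun m => ?_
    simp only [f]; push_cast; rw [mul_pow]; ring
  have h_odd : HasSum (fun m => f (2 * m + 1)) (z - z / 2 ^ k) := by
    have hs : Summable fun m => f (2 * m + 1) :=
      h.summable.comp_injective fun a b hab => by omega
    have hz := h.unique (h_even.even_add_odd hs.hasSum)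
    nth_rewrite 1 [hz]
    rw [add_sub_cancel_left]
    exact hs.hasSum
  have h_succ : HasSum (fun m => f (m + 1)) z := by
    simpa [f, hk] using (hasSum_nat_add_iff' 1).mpr h
  rw [show (1 - 2 / 2 ^ k) * z = (z - z / 2 ^ k) + -(z / 2 ^ k) by ring]
  refine HasSum.even_add_odd (h_odd.congr_fun fun m => ?_)
    ((h_succ.div_const (2 ^ k)).neg.congr_fun fun m => ?_)
  · simp only [f]; push_cast; rw [pow_mul]; norm_num
  · simp only [f]; push_cast
    rw [pow_succ, pow_mul, show (2 * (m : ℝ) + 1 + 1) = 2 * (m + 1) by ring, mul_pow]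
    norm_num
    ring

lemma integrableOn_pow_mul_tanh_sub_one (k : ℕ) {c : ℝ} (hc : 0 < c) :
    IntegrableOn (fun t => t ^ k * (tanh (c * t) - 1)) (Ioi 0) := by
  have h_exp :
      IntegrableOn (fun t : ℝ => t ^ (k : ℝ) * exp (-(2 * c) * t ^ (1 : ℝ))) (Ioi 0) :=
    integrableOn_rpow_mul_exp_neg_mul_rpow (by linarith [k.cast_nonneg (α := ℝ)]) one_pos
      (by positivity)
  refine (h_exp.const_mul 2).mono' ?_ ((ae_restrict_iff' measurableSet_Ioi).mpr ?_)
  · exact (by fun_prop : Continuous fun t => t ^ k * (tanh (c * t) - 1)).aestronglyMeasurable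
  · refine ae_of_all _ fun t (ht : 0 < t) => ?_
    rw [norm_mul, norm_pow, norm_of_nonneg ht.le, rpow_natCast, rpow_one, Real.norm_eq_abs]
    calc t ^ k * |tanh (c * t) - 1| ≤ t ^ k * (2 * exp (-(2 * (c * t)))) := by
          gcongr; exact abs_tanh_sub_one_le _
      _ = _ := by ring_nf

lemma mellin_ofReal_natCast_add_one (f : ℝ → ℝ) (k : ℕ) :
    mellin (fun t => (f t : ℂ)) (k + 1) = ((∫ t in Ioi 0, t ^ k * f t : ℝ) : ℂ) := by
  rw [mellin, ← integral_complex_ofReal]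
  refine setIntegral_congr_fun measurableSet_Ioi fun t _ => ?_
  simp

lemma hasSum_integral_pow_mul_tanh_sub_one {k : ℕ} (hk : k ≠ 0) {c : ℝ} (hc : 0 < c) :
    HasSum (fun n : ℕ => -2 * k ! * (-1) ^ n / (2 * c * (n + 1)) ^ (k + 1))
      (∫ t in Ioi 0, t ^ k * (tanh (c * t) - 1)) := by
  set p : ℕ → ℝ := fun n => 2 * c * (n + 1)
  have hp : ∀ n, 0 < p n := fun n => by positivity
  have h_mellin := hasSum_mellin (a := fun n => ((-2 * (-1) ^ n : ℝ) : ℂ)) (p := p)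
    (F := fun t => ((tanh (c * t) - 1 : ℝ) : ℂ)) (s := k + 1)
    (fun n => Or.inr (hp n))
    (by rw [Complex.add_re, Complex.natCast_re, Complex.one_re]; positivity) ?_ ?_
  · rw [mellin_ofReal_natCast_add_one] at h_mellin
    refine Complex.hasSum_ofReal.mp (h_mellin.congr_fun fun n => ?_)
    rw [Complex.Gamma_nat_eq_factorial, show (k : ℂ) + 1 = (k + 1 : ℕ) by push_cast; ring,
      Complex.cpow_natCast]
    push_cast [p]; ring
  · intro t ht
    simp only [← Complex.ofReal_mul, Complex.hasSum_ofReal]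
    refine ((hasSum_tanh_sub_one (mul_pos hc ht)).congr_fun fun n => ?_)
    simp only [p]; ring_nf
  · have hk1 : (1 : ℝ) < k + 1 := by
      have : (1 : ℝ) ≤ k := Nat.one_le_cast.mpr (Nat.one_le_iff_ne_zero.mpr hk)
      linarith
    refine (((Real.summable_one_div_nat_add_rpow 1 _).mpr hk1).mul_left
      (2 / (2 * c) ^ ((k : ℝ) + 1))).congr fun n => ?_
    have hn : |(n : ℝ) + 1| = n + 1 := abs_of_pos (by positivity)
    simp only [p, hn, Complex.norm_real, norm_mul, norm_neg, norm_pow, norm_one, one_pow,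
      Real.norm_ofNat, Complex.add_re, Complex.natCast_re, Complex.one_re]
    rw [mul_rpow (by positivity : (0 : ℝ) ≤ 2 * c) (by positivity : (0 : ℝ) ≤ n + 1)]
    field_simp

lemma integral_pow_mul_tanh_sub_one {k : ℕ} (hk : k ≠ 0) {c : ℝ} (hc : 0 < c) {η : ℝ}
    (hη : HasSum (fun n : ℕ => (-1) ^ n / ((n : ℝ) + 1) ^ (k + 1)) η) :
    ∫ t in Ioi 0, t ^ k * (tanh (c * t) - 1) = -2 * k ! * η / (2 * c) ^ (k + 1) := by
  refine (hasSum_integral_pow_mul_tanh_sub_one hk hc).unique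
    ((hη.mul_left (-2 * k ! / (2 * c) ^ (k + 1))).congr_fun fun n => ?_) |>.trans (by ring)
  rw [mul_pow]
  field_simp

lemma integral_Ioi_smul_comp_sqrt_sq_sub {E : Type*} [NormedAddCommGroup E] [NormedSpace ℝ E]
    {c : ℝ} (hc : 0 ≤ c) (f : ℝ → E) :
    ∫ τ in Ioi c, τ • f √(τ ^ 2 - c ^ 2) = ∫ u in Ioi 0, u • f u := by
  set r : ℝ → ℝ := fun u => √(u ^ 2 + c ^ 2)
  have hr_pos : ∀ u, 0 < u → 0 < r u := fun u hu => sqrt_pos.mpr (by positivity)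
  have hr_image : r '' Ioi 0 = Ioi c := by
    ext τ
    constructor
    · rintro ⟨u, hu : 0 < u, rfl⟩
      exact (lt_sqrt hc).mpr (by nlinarith)
    · intro (hτ : c < τ)
      refine ⟨√(τ ^ 2 - c ^ 2), sqrt_pos.mpr (by nlinarith), ?_⟩
      simp only [r]
      rw [sq_sqrt (by nlinarith), sub_add_cancel, sqrt_sq (by linarith)]
  have hr_deriv : ∀ u ∈ Ioi 0, HasDerivWithinAt r (u / r u) (Ioi 0) u :=
      fun u (hu : 0 < u) => by
    have h := ((hasDerivAt_pow 2 u).add_const (c ^ 2)).sqrt (by positivity : u ^ 2 + c ^ 2 ≠ 0)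
    refine h.hasDerivWithinAt.congr_deriv ?_
    simp only [r]
    field_simp
    norm_num
  have hr_inj : InjOn r (Ioi 0) := fun u (hu : 0 < u) v (hv : 0 < v) huv => by
    have := (sqrt_inj (by positivity) (by positivity)).mp huv
    nlinarith
  rw [← hr_image, integral_image_eq_integral_abs_deriv_smul measurableSet_Ioi hr_deriv hr_inj]
  refine setIntegral_congr_fun measurableSet_Ioi fun u (hu : 0 < u) => ?_
  have h_inv : √(r u ^ 2 - c ^ 2) = u := by
    rw [sq_sqrt (by positivity), add_sub_cancel_right, sqrt_sq hu.le]
  rw [h_inv, abs_of_pos (div_pos hu (hr_pos u hu)), smul_smul,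
    div_mul_cancel₀ _ (hr_pos u hu).ne']

theorem integral_tanh_cubed :
    ∫ τ in Set.Ioi (1/2 : ℝ),
      τ ^ 3 * (Real.tanh (π * Real.sqrt (τ ^ 2 - 1/4)) - 1) = -17/960 := by
  have h_int (k : ℕ) := integrableOn_pow_mul_tanh_sub_one k pi_pos
  have h_eta_two := hasSum_alternating_one_div_succ_pow two_ne_zero hasSum_zeta_two
  have h_eta_four := hasSum_alternating_one_div_succ_pow four_ne_zero hasSum_zeta_four
  calc ∫ τ in Ioi (1/2 : ℝ), τ ^ 3 * (tanh (π * √(τ ^ 2 - 1/4)) - 1)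
      = ∫ τ in Ioi (1/2 : ℝ), τ • ((√(τ ^ 2 - (1/2) ^ 2) ^ 2 + (1/2) ^ 2) *
          (tanh (π * √(τ ^ 2 - (1/2) ^ 2)) - 1)) := by
        refine setIntegral_congr_fun measurableSet_Ioi fun τ (hτ : 1/2 < τ) => ?_
        rw [sq_sqrt (by nlinarith), smul_eq_mul]
        ring_nf
    _ = ∫ u in Ioi 0, u • ((u ^ 2 + (1/2) ^ 2) * (tanh (π * u) - 1)) :=
        integral_Ioi_smul_comp_sqrt_sq_sub (by norm_num)
          fun u => (u ^ 2 + (1/2) ^ 2) * (tanh (π * u) - 1)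
    _ = (∫ u in Ioi 0, u ^ 3 * (tanh (π * u) - 1)) +
          1/4 * ∫ u in Ioi 0, u ^ 1 * (tanh (π * u) - 1) := by
        rw [← integral_const_mul, ← integral_add (h_int 3) ((h_int 1).const_mul _)]
        congr 1; ext u; simp only [smul_eq_mul]; ring
    _ = -17/960 := by
        rw [integral_pow_mul_tanh_sub_one three_ne_zero pi_pos h_eta_four,
          integral_pow_mul_tanh_sub_one one_ne_zero pi_pos h_eta_two]
        field_simp
        ring
end

section
/- ∫_{1/2}^∞ τ⁵ (tanh(π √(τ² − 1/4)) − 1) dτ = −407/40320. -/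
/-!
Substituting `t = √(τ² - 1/4)` turns the integral into `∫₀^∞ t (t² + 1/4)² (tanh (π t) - 1) dt`.
Since `tanh x - 1 = -2 / (e^{2x} + 1)` and `1 / (eˣ + 1) = ∑ₙ (-1)ⁿ e^{-(n+1)x}`, integrating termwise
gives `∫₀^∞ tᵏ / (e^{ct} + 1) dt = k! η(k+1) / c^{k+1}` with `η(s) = (1 - 2^{1-s}) ζ(s)`. For
`c = 2π` the values `ζ(2) = π²/6`, `ζ(4) = π⁴/90`, `ζ(6) = π⁶/945` make every power of `π` cancel.
-/

open Real MeasureTheory Set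
open scoped Nat

theorem bernoulli'_six : bernoulli' 6 = 1 / 42 := by
  have h5 : bernoulli' 5 = 0 := by
    rw [bernoulli'_def]
    norm_num [Finset.sum_range_succ, Nat.choose]
  rw [bernoulli'_def]
  norm_num [Finset.sum_range_succ, Nat.choose, h5]

theorem hasSum_zeta_six : HasSum (fun n : ℕ => (1 : ℝ) / (n : ℝ) ^ 6) (π ^ 6 / 945) := by
  convert hasSum_zeta_nat (k := 3) three_ne_zero using 1
  rw [bernoulli_eq_bernoulli'_of_ne_one (by decide), bernoulli'_six]
  norm_num [Nat.factorial]
  ring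

theorem hasSum_neg_one_pow_div_succ_pow {k : ℕ} (hk : k ≠ 0) {z : ℝ}
    (hz : HasSum (fun n : ℕ => 1 / (n : ℝ) ^ k) z) :
    HasSum (fun n : ℕ => (-1) ^ n / ((n : ℝ) + 1) ^ k) ((1 - 2 / 2 ^ k) * z) := by
  have hz' : HasSum (fun n : ℕ => 1 / ((n : ℝ) + 1) ^ k) z := by
    simpa [hk] using (hasSum_nat_add_iff' 1).mpr hz
  -- the terms with odd `n` have even denominators `n + 1`, so they sum to `z / 2 ^ k`
  set oddTerms : ℕ → ℝ := fun n => if Even n then 0 else 1 / ((n : ℝ) + 1) ^ k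
  have hodd : HasSum oddTerms (z / 2 ^ k) := by
    have h := HasSum.even_add_odd (f := oddTerms) (m := 0) (m' := z / 2 ^ k) ?_ ?_
    · simpa using h
    · simp [oddTerms, hasSum_zero]
    · refine (hz'.div_const (2 ^ k)).congr_fun fun m => ?_
      simp only [oddTerms, Nat.not_even_two_mul_add_one, if_false]
      push_cast
      rw [show (2 * (m : ℝ) + 1 + 1) = 2 * (m + 1) by ring, mul_pow]
      field_simp
  rw [show (1 - 2 / 2 ^ k) * z = z - 2 * (z / 2 ^ k) by ring]
  refine (hz'.sub (hodd.mul_left 2)).congr_fun fun n => ?_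
  rcases Nat.even_or_odd n with h | h
  · simp [oddTerms, h, h.neg_one_pow]
  · simp [oddTerms, Nat.not_even_iff_odd.mpr h, h.neg_one_pow]
    ring

theorem Real.tanh_sub_one (x : ℝ) : tanh x - 1 = -2 / (exp (2 * x) + 1) := by
  rw [tanh_eq, two_mul, exp_add, exp_neg]
  field_simp
  ring

theorem hasSum_neg_one_pow_mul_exp {x : ℝ} (hx : 0 < x) :
    HasSum (fun n : ℕ => (-1) ^ n * exp (-((n + 1) * x))) (1 / (exp x + 1)) := by
  have hr : ‖-exp (-x)‖ < 1 := by simpa [abs_of_pos (exp_pos _)] using hx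
  have h := (hasSum_geometric_of_norm_lt_one hr).mul_left (exp (-x))
  rw [show exp (-x) * (1 - -exp (-x))⁻¹ = 1 / (exp x + 1) by
    have := exp_pos x
    rw [sub_neg_eq_add, exp_neg]; field_simp] at h
  refine h.congr_fun fun n => ?_
  rw [neg_pow (exp (-x)), ← exp_nat_mul, mul_left_comm, ← exp_add]
  ring_nf

theorem integral_pow_mul_exp_neg_mul (k : ℕ) {c : ℝ} (hc : 0 < c) :
    ∫ t in Ioi 0, t ^ k * exp (-(c * t)) = k ! / c ^ (k + 1) := by
  have h := integral_rpow_mul_exp_neg_mul_Ioi (a := k + 1) (by positivity) hc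
  simp only [add_sub_cancel_right, rpow_natCast, Gamma_nat_eq_factorial] at h
  rw [h, ← Nat.cast_add_one, rpow_natCast, div_pow, one_pow]
  ring

theorem integrableOn_pow_mul_exp_neg_mul (k : ℕ) {c : ℝ} (hc : 0 < c) :
    IntegrableOn (fun t : ℝ => t ^ k * exp (-(c * t))) (Ioi 0) := by
  simpa using integrableOn_rpow_mul_exp_neg_mul_rpow (p := 1) (s := k)
    (by linarith [k.cast_nonneg (α := ℝ)]) one_pos hc

theorem integrableOn_pow_div_exp_add_one (k : ℕ) {c : ℝ} (hc : 0 < c) :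
    IntegrableOn (fun t : ℝ => t ^ k / (exp (c * t) + 1)) (Ioi 0) := by
  refine (integrableOn_pow_mul_exp_neg_mul k hc).mono'
    (by fun_prop : Measurable _).aestronglyMeasurable ?_
  filter_upwards [ae_restrict_mem measurableSet_Ioi] with t ht
  have ht : 0 < t := ht
  rw [norm_of_nonneg (by positivity), exp_neg, ← div_eq_mul_inv]
  gcongr
  linarith

theorem integral_pow_div_exp_add_one {k : ℕ} (hk : k ≠ 0) {c : ℝ} (hc : 0 < c) :
    ∫ t in Ioi 0, t ^ k / (exp (c * t) + 1)
      = k ! / c ^ (k + 1) * ∑' n : ℕ, (-1) ^ n / ((n : ℝ) + 1) ^ (k + 1) := by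
  set F : ℕ → ℝ → ℝ := fun n t => (-1) ^ n * (t ^ k * exp (-(c * (n + 1) * t)))
  have hc' (n : ℕ) : 0 < c * (n + 1) := by positivity
  have hF : ∀ t ∈ Ioi (0 : ℝ), t ^ k / (exp (c * t) + 1) = ∑' n, F n t := by
    intro t ht
    rw [div_eq_mul_one_div,
      ← ((hasSum_neg_one_pow_mul_exp (mul_pos hc ht)).mul_left (t ^ k)).tsum_eq]
    congr 1 with n
    simp only [F]
    ring_nf
  have hint (n : ℕ) : IntegrableOn (F n) (Ioi 0) :=
    (integrableOn_pow_mul_exp_neg_mul k (hc' n)).const_mul _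
  have hnorm (n : ℕ) :
      ∫ t in Ioi 0, ‖F n t‖ = k ! / c ^ (k + 1) * (1 / ((n : ℝ) + 1) ^ (k + 1)) := by
    have habs : ∀ t ∈ Ioi (0 : ℝ), ‖F n t‖ = t ^ k * exp (-(c * (n + 1) * t)) :=
      fun t (ht : 0 < t) => by simp [F, abs_of_pos ht]
    rw [setIntegral_congr_fun measurableSet_Ioi habs, integral_pow_mul_exp_neg_mul k (hc' n),
      mul_pow]
    field_simp
  have hsum : Summable fun n => ∫ t in Ioi 0, ‖F n t‖ := by
    simp_rw [hnorm]
    refine Summable.mul_left _ ?_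
    exact_mod_cast (summable_nat_add_iff 1).mpr (Real.summable_one_div_nat_pow.mpr (by omega))
  rw [setIntegral_congr_fun measurableSet_Ioi hF,
    ← (hasSum_integral_of_summable_integral_norm hint hsum).tsum_eq, ← tsum_mul_left]
  congr 1 with n
  rw [integral_const_mul, integral_pow_mul_exp_neg_mul k (hc' n), mul_pow]
  field_simp

theorem integral_pow_div_exp_add_one_of_hasSum_zeta {k : ℕ} (hk : k ≠ 0) {c z : ℝ}
    (hc : 0 < c) (hz : HasSum (fun n : ℕ => 1 / (n : ℝ) ^ (k + 1)) z) :
    ∫ t in Ioi 0, t ^ k / (exp (c * t) + 1)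
      = k ! / c ^ (k + 1) * ((1 - 2 / 2 ^ (k + 1)) * z) := by
  rw [integral_pow_div_exp_add_one hk hc,
    (hasSum_neg_one_pow_div_succ_pow k.succ_ne_zero hz).tsum_eq]

theorem integral_Ioi_mul_comp_sqrt_sq_sub {a : ℝ} (ha : 0 ≤ a) (f : ℝ → ℝ) :
    ∫ τ in Ioi a, τ * f √(τ ^ 2 - a ^ 2) = ∫ t in Ioi 0, t * f t := by
  set g : ℝ → ℝ := fun τ => √(τ ^ 2 - a ^ 2)
  have hpos : ∀ τ ∈ Ioi a, 0 < τ ^ 2 - a ^ 2 := fun τ (hτ : a < τ) => by nlinarith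
  have himage : g '' Ioi a = Ioi 0 := by
    ext t
    constructor
    · rintro ⟨τ, hτ, rfl⟩
      exact sqrt_pos.mpr (hpos τ hτ)
    · intro (ht : 0 < t)
      refine ⟨√(t ^ 2 + a ^ 2), (lt_sqrt ha).mpr (by nlinarith), ?_⟩
      simp [g, sq_sqrt (by positivity : 0 ≤ t ^ 2 + a ^ 2), sqrt_sq ht.le]
  have hderiv : ∀ τ ∈ Ioi a, HasDerivWithinAt g (τ / g τ) (Ioi a) τ := fun τ hτ =>
    (((hasDerivAt_pow 2 τ).sub_const (a ^ 2)).sqrt (hpos τ hτ).ne').hasDerivWithinAt.congr_deriv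
      (by simp [g]; field_simp)
  have hinj : InjOn g (Ioi a) := StrictMonoOn.injOn fun x (hx : a < x) y _ hxy =>
    sqrt_lt_sqrt (hpos x hx).le (by nlinarith)
  rw [← himage, integral_image_eq_integral_abs_deriv_smul measurableSet_Ioi hderiv hinj]
  refine setIntegral_congr_fun measurableSet_Ioi fun τ (hτ : a < τ) => ?_
  have hg : 0 < g τ := sqrt_pos.mpr (hpos τ hτ)
  rw [smul_eq_mul, abs_of_pos (div_pos (by linarith) hg), ← mul_assoc, div_mul_cancel₀ _ hg.ne']

theorem integral_tanh_fifth :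
    ∫ τ in Set.Ioi (1/2 : ℝ),
      τ ^ 5 * (Real.tanh (π * Real.sqrt (τ ^ 2 - 1/4)) - 1) = -407/40320 := by
  have hI (k : ℕ) := integrableOn_pow_div_exp_add_one k two_pi_pos
  have hsubst : ∫ τ in Ioi (1/2 : ℝ), τ ^ 5 * (tanh (π * √(τ ^ 2 - 1/4)) - 1)
      = ∫ t in Ioi 0, t * ((t ^ 2 + (1/2) ^ 2) ^ 2 * (tanh (π * t) - 1)) := by
    rw [← integral_Ioi_mul_comp_sqrt_sq_sub (by norm_num : (0 : ℝ) ≤ 1/2)]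
    refine setIntegral_congr_fun measurableSet_Ioi fun τ (hτ : 1/2 < τ) => ?_
    rw [sq_sqrt (by nlinarith)]
    ring_nf
  have hexpand : ∀ t ∈ Ioi (0 : ℝ), t * ((t ^ 2 + (1/2) ^ 2) ^ 2 * (tanh (π * t) - 1))
      = -2 * (t ^ 5 / (exp (2 * π * t) + 1)) - t ^ 3 / (exp (2 * π * t) + 1)
        - t ^ 1 / (exp (2 * π * t) + 1) / 8 := fun t _ => by
    have : exp (2 * π * t) + 1 ≠ 0 := by positivity
    rw [tanh_sub_one, ← mul_assoc]
    field_simp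
    ring
  rw [hsubst, setIntegral_congr_fun measurableSet_Ioi hexpand,
    integral_sub ?_ ((hI 1).div_const _), integral_sub ((hI 5).const_mul _) (hI 3),
    integral_const_mul, integral_div,
    integral_pow_div_exp_add_one_of_hasSum_zeta (by norm_num) two_pi_pos hasSum_zeta_six,
    integral_pow_div_exp_add_one_of_hasSum_zeta (by norm_num) two_pi_pos hasSum_zeta_four,
    integral_pow_div_exp_add_one_of_hasSum_zeta one_ne_zero two_pi_pos hasSum_zeta_two]
  · norm_num [Nat.factorial]
    field_simp
    ring
  · exact ((hI 5).const_mul _).sub (hI 3)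
end

section
/- Define G₂(τ) for τ ≥ 0 by G₂(0)=0 and G₂'(τ) = (1/(2π)) H(τ − 1/2) (tanh(π√(τ² − 1/4)) − 1) τ, where H is the Heaviside step function. Then G₂ is nonpositive, nonincreasing in absolute value bounded, and sup_{τ≥0} |G₂(τ)| ≤ 1/(48π). -/
open Real MeasureTheory

/-- The derivative G₂'(τ) = (1/(2π)) H(τ − 1/2)(tanh(π√(τ²−1/4)) − 1) τ. -/
noncomputable def G2deriv (τ : ℝ) : ℝ :=
  (1 / (2 * π)) * (if (1:ℝ)/2 ≤ τ then 1 else 0) *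
    (Real.tanh (π * Real.sqrt (τ ^ 2 - 1/4)) - 1) * τ

/-- G₂(τ) = ∫_0^τ G₂'(s) ds. -/
noncomputable def G2 (τ : ℝ) : ℝ := ∫ s in (0:ℝ)..τ, G2deriv s

open Set

/-
G₂' ≤ 0 vanishes on [0, 1/2), so G₂ is nonincreasing and nonpositive, and sup |G₂| is the total
mass ∫₀^∞ -G₂'. The substitution s = √(u² + 1/4) turns this mass into
(1/(2π)) ∫₀^∞ u (1 - tanh πu) du. Expanding 1 - tanh x = 2 ∑ₙ (-1)ⁿ e^{-2(n+1)x} and integrating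
termwise gives ∫₀^∞ u (1 - tanh πu) du = η(2)/(2π²) = 1/24, where η(2) = ∑ₙ (-1)ⁿ/(n+1)² = π²/12.
-/

theorem hasSum_one_div_succ_sq : HasSum (fun n : ℕ => 1 / ((n : ℝ) + 1) ^ 2) (π ^ 2 / 6) := by
  have := (hasSum_nat_add_iff (f := fun n : ℕ => 1 / (n : ℝ) ^ 2) 1).mpr
    (by simpa using hasSum_zeta_two)
  exact this.congr_fun fun n => by push_cast; rfl

theorem hasSum_neg_one_pow_div_succ_sq :
    HasSum (fun n : ℕ => (-1 : ℝ) ^ n / ((n : ℝ) + 1) ^ 2) (π ^ 2 / 12) := by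
  -- subtracting it from `ζ(2)` kills the even terms and doubles the odd ones: `2 * (ζ(2) / 4)`
  have hdiff : HasSum (fun n : ℕ => 1 / ((n : ℝ) + 1) ^ 2 - (-1) ^ n / ((n : ℝ) + 1) ^ 2)
      (0 + 1 / 2 * (π ^ 2 / 6)) := by
    refine HasSum.even_add_odd (hasSum_zero.congr_fun fun k => ?_)
      ((hasSum_one_div_succ_sq.mul_left (1 / 2)).congr_fun fun k => ?_)
    · simp [pow_mul]
    · simp only [pow_succ, pow_mul]
      push_cast
      field_simp
      ring
  have := hasSum_one_div_succ_sq.sub hdiff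
  rw [show π ^ 2 / 6 - (0 + 1 / 2 * (π ^ 2 / 6)) = π ^ 2 / 12 by ring] at this
  exact this.congr_fun fun n => by ring

theorem one_sub_tanh_eq (x : ℝ) :
    1 - tanh x = 2 * exp (-(2 * x)) / (1 + exp (-(2 * x))) := by
  have hx : exp (-(2 * x)) = exp (-x) / exp x := by
    rw [← exp_sub]; ring_nf
  rw [tanh_eq_sinh_div_cosh, sinh_eq, cosh_eq, hx]
  field_simp
  ring

theorem hasSum_one_sub_tanh {x : ℝ} (hx : 0 < x) :
    HasSum (fun n : ℕ => 2 * (-1) ^ n * exp (-(2 * ((n : ℝ) + 1) * x))) (1 - tanh x) := by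
  have hr : ‖-exp (-(2 * x))‖ < 1 := by
    rw [norm_neg, norm_of_nonneg (exp_pos _).le, exp_lt_one_iff]; linarith
  have := (hasSum_geometric_of_norm_lt_one hr).mul_left (2 * exp (-(2 * x)))
  rw [sub_neg_eq_add, ← div_eq_mul_inv, ← one_sub_tanh_eq] at this
  refine this.congr_fun fun n => ?_
  rw [neg_pow (exp _), ← exp_nat_mul,
    show -(2 * ((n : ℝ) + 1) * x) = -(2 * x) + n * -(2 * x) by ring, exp_add]
  ring

theorem integral_Ioi_mul_exp_neg_mul {b : ℝ} (hb : 0 < b) :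
    ∫ u in Ioi (0 : ℝ), u * exp (-(b * u)) = 1 / b ^ 2 := by
  have h := integral_rpow_mul_exp_neg_mul_Ioi two_pos hb
  norm_num [Gamma_two] at h
  rwa [one_div]

theorem integrableOn_Ioi_mul_exp_neg_mul {b : ℝ} (hb : 0 < b) :
    IntegrableOn (fun u => u * exp (-(b * u))) (Ioi 0) :=
  Integrable.of_integral_ne_zero (by rw [integral_Ioi_mul_exp_neg_mul hb]; positivity)

theorem integral_Ioi_mul_one_sub_tanh_mul {c : ℝ} (hc : 0 < c) :
    ∫ u in Ioi (0 : ℝ), u * (1 - tanh (c * u)) = π ^ 2 / (24 * c ^ 2) := by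
  have hb : ∀ n : ℕ, 0 < 2 * ((n : ℝ) + 1) * c := fun n => by positivity
  set F : ℕ → ℝ → ℝ := fun n u => 2 * (-1) ^ n * (u * exp (-(2 * ((n : ℝ) + 1) * c * u)))
  have hF_int (n : ℕ) : IntegrableOn (F n) (Ioi 0) :=
    (integrableOn_Ioi_mul_exp_neg_mul (hb n)).const_mul _
  have hF (n : ℕ) :
      ∫ u in Ioi 0, F n u = 1 / (2 * c ^ 2) * ((-1) ^ n / ((n : ℝ) + 1) ^ 2) := by
    rw [integral_const_mul, integral_Ioi_mul_exp_neg_mul (hb n)]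
    field_simp
  have hF_norm (n : ℕ) :
      ∫ u in Ioi 0, ‖F n u‖ = 1 / (2 * c ^ 2) * (1 / ((n : ℝ) + 1) ^ 2) := by
    have h (u : ℝ) (hu : 0 < u) :
        ‖F n u‖ = 2 * (u * exp (-(2 * ((n : ℝ) + 1) * c * u))) := by
      simp [F, abs_of_pos hu]
    rw [setIntegral_congr_fun measurableSet_Ioi h, integral_const_mul,
      integral_Ioi_mul_exp_neg_mul (hb n)]
    field_simp
  have hsum := hasSum_integral_of_summable_integral_norm hF_int
    (by simpa only [hF_norm] using (hasSum_one_div_succ_sq.mul_left _).summable)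
  simp only [hF] at hsum
  have hseries (u : ℝ) (hu : u ∈ Ioi 0) : u * (1 - tanh (c * u)) = ∑' n, F n u :=
    (((hasSum_one_sub_tanh (mul_pos hc hu)).mul_left u).congr_fun fun n => by
      simp only [F]; ring_nf).tsum_eq.symm
  rw [setIntegral_congr_fun measurableSet_Ioi hseries,
    hsum.unique (hasSum_neg_one_pow_div_succ_sq.mul_left _)]
  field_simp
  ring

theorem integral_Ioi_mul_comp_sqrt_sq_sub_sq {a : ℝ} (ha : 0 ≤ a) (g : ℝ → ℝ) :
    ∫ s in Ioi a, s * g √(s ^ 2 - a ^ 2) = ∫ u in Ioi 0, u * g u := by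
  set f : ℝ → ℝ := fun u => √(u ^ 2 + a ^ 2)
  have hf_sq (u : ℝ) : f u ^ 2 = u ^ 2 + a ^ 2 := sq_sqrt (by positivity)
  have hf_pos (u : ℝ) (hu : 0 < u) : 0 < f u := sqrt_pos.2 (by positivity)
  have hderiv (u : ℝ) (hu : 0 < u) :
      HasDerivWithinAt f (u / f u) (Ioi 0) u := by
    have := ((hasDerivAt_pow 2 u).add_const (a ^ 2)).sqrt (sqrt_pos.1 (hf_pos u hu)).ne'
    refine this.hasDerivWithinAt.congr_deriv ?_
    norm_num [f]
    field_simp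
  have hmono : StrictMonoOn f (Ioi 0) := fun u (hu : 0 < u) v _ huv =>
    sqrt_lt_sqrt (by positivity) (by gcongr)
  have himage : f '' Ioi 0 = Ioi a := by
    ext s
    constructor
    · rintro ⟨u, hu : 0 < u, rfl⟩
      exact (lt_sqrt ha).2 (lt_add_of_pos_left _ (by positivity))
    · intro (hs : a < s)
      refine ⟨√(s ^ 2 - a ^ 2), sqrt_pos.2 (by nlinarith), ?_⟩
      rw [show f _ = √(√(s ^ 2 - a ^ 2) ^ 2 + a ^ 2) from rfl, sq_sqrt (by nlinarith),
        sub_add_cancel, sqrt_sq (by linarith)]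
  rw [← himage, integral_image_eq_integral_abs_deriv_smul measurableSet_Ioi hderiv hmono.injOn]
  refine setIntegral_congr_fun measurableSet_Ioi fun u (hu : 0 < u) => ?_
  rw [hf_sq, add_sub_cancel_right, sqrt_sq hu.le, abs_of_pos (div_pos hu (hf_pos u hu)),
    smul_eq_mul]
  field_simp [(hf_pos u hu).ne']

theorem neg_G2deriv_eq_indicator (s : ℝ) :
    -G2deriv s = (Ici (1 / 2 : ℝ)).indicator
      (fun s => 1 / (2 * π) * (s * (1 - tanh (π * √(s ^ 2 - (1 / 2) ^ 2))))) s := by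
  by_cases hs : 1 / 2 ≤ s
  · rw [G2deriv, if_pos hs, indicator_of_mem (mem_Ici.2 hs),
      show (1 / 2 : ℝ) ^ 2 = 1 / 4 by norm_num]
    ring
  · simp only [G2deriv, if_neg hs, indicator_of_notMem (mt mem_Ici.1 hs)]
    ring

theorem G2deriv_nonpos (s : ℝ) : G2deriv s ≤ 0 := by
  rw [← neg_nonneg, neg_G2deriv_eq_indicator]
  refine indicator_nonneg (fun t (ht : 1 / 2 ≤ t) => ?_) s
  have := sub_pos.2 (tanh_lt_one (π * √(t ^ 2 - (1 / 2) ^ 2)))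
  have : 0 ≤ t := by linarith
  positivity

theorem integral_Ioi_neg_G2deriv : ∫ s in Ioi 0, -G2deriv s = 1 / (48 * π) := by
  simp_rw [neg_G2deriv_eq_indicator]
  rw [setIntegral_indicator measurableSet_Ici,
    inter_eq_self_of_subset_right (Ici_subset_Ioi.2 (by norm_num)), integral_Ici_eq_integral_Ioi,
    integral_const_mul, integral_Ioi_mul_comp_sqrt_sq_sub_sq (by norm_num)
      (fun u => 1 - tanh (π * u)), integral_Ioi_mul_one_sub_tanh_mul pi_pos]
  field_simp
  ring

theorem integrableOn_G2deriv : IntegrableOn G2deriv (Ioi 0) := by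
  have : IntegrableOn (fun s => -G2deriv s) (Ioi 0) :=
    Integrable.of_integral_ne_zero (by rw [integral_Ioi_neg_G2deriv]; positivity)
  simpa using this.neg

/-- G₂ is nonpositive, nonincreasing on [0,∞), and bounded by 1/(48π) in sup norm. -/
theorem G2_bounds :
    (∀ τ : ℝ, 0 ≤ τ → G2 τ ≤ 0) ∧
    (AntitoneOn G2 (Set.Ici 0)) ∧
    (∀ τ : ℝ, 0 ≤ τ → |G2 τ| ≤ 1 / (48 * π)) := by
  have hint := integrableOn_G2deriv
  have hnonneg (t : Set ℝ) : 0 ≤ᵐ[volume.restrict t] fun s => -G2deriv s :=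
    ae_of_all _ fun s => neg_nonneg.2 (G2deriv_nonpos s)
  have hanti : AntitoneOn G2 (Ici 0) := fun a (ha : 0 ≤ a) b _ hab => by
    have := intervalIntegral.integral_mono_interval le_rfl ha hab (hnonneg _)
      ((intervalIntegrable_iff_integrableOn_Ioc_of_le (ha.trans hab)).2
        (hint.neg.mono_set Ioc_subset_Ioi_self))
    simpa [G2, intervalIntegral.integral_neg] using this
  have hnonpos (τ : ℝ) (hτ : 0 ≤ τ) : G2 τ ≤ 0 := by
    simpa [G2] using hanti self_mem_Ici hτ hτ
  refine ⟨hnonpos, hanti, fun τ hτ => ?_⟩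
  rw [abs_of_nonpos (hnonpos τ hτ), ← integral_Ioi_neg_G2deriv, G2,
    ← intervalIntegral.integral_neg, intervalIntegral.integral_of_le hτ]
  exact setIntegral_mono_set hint.neg (hnonneg _) Ioc_subset_Ioi_self.eventuallyLE
end

section
/- Let n ≥ 2 be an integer and define γ: ℂ → ℝ by γ(t) = (1 + |√(t² + (n−1)²/4)|)/(1 + |t|), with the principal-type branch of square root specified so that the expression is continuous. Then inf_{t ∈ ℂ} γ(t) = 2/(n+1), attained at t = i(n−1)/2, and sup_{t∈ℂ} γ(t) = (n+1)/2, attained at t = 0. -/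
/-!
Write `c = (n - 1)/2`, `a = ‖t‖` and `s = √‖t² + c²‖`. The triangle inequality gives
`s ≤ a + c`, and also `s² ≥ a² - c² ≥ (a - c)²` when `a ≥ c ≥ 0`, so `a - c ≤ s`.
Hence `1 + a ≤ (1 + c)(1 + s)` and `1 + s ≤ (1 + c)(1 + a)`, i.e. the ratio lies in
`[1/(1 + c), 1 + c]`; the ends are reached where `t² + c² = 0` and at `t = 0`.
-/

open Complex

noncomputable def gammaRatio (c : ℝ) (t : ℂ) : ℝ :=
  (1 + √‖t ^ 2 + (c : ℂ) ^ 2‖) / (1 + ‖t‖)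

section

variable {c : ℝ}

theorem sqrt_norm_sq_add_sq_le_norm_add (hc : 0 ≤ c) (t : ℂ) :
    √‖t ^ 2 + (c : ℂ) ^ 2‖ ≤ ‖t‖ + c := by
  have hle : ‖t ^ 2 + (c : ℂ) ^ 2‖ ≤ (‖t‖ + c) ^ 2 :=
    calc ‖t ^ 2 + (c : ℂ) ^ 2‖ ≤ ‖t‖ ^ 2 + c ^ 2 := by
          have h := norm_add_le (t ^ 2) ((c : ℂ) ^ 2)
          rwa [norm_pow, norm_pow, norm_real, Real.norm_of_nonneg hc] at h
      _ ≤ (‖t‖ + c) ^ 2 := by nlinarith [mul_nonneg (norm_nonneg t) hc]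
  exact Real.sqrt_le_iff.mpr ⟨by positivity, hle⟩

theorem norm_sub_le_sqrt_norm_sq_add_sq (hc : 0 ≤ c) (t : ℂ) :
    ‖t‖ - c ≤ √‖t ^ 2 + (c : ℂ) ^ 2‖ := by
  rcases le_or_gt ‖t‖ c with hle | hlt
  · exact (sub_nonpos.mpr hle).trans (Real.sqrt_nonneg _)
  apply Real.le_sqrt_of_sq_le
  have hsub : ‖t‖ ^ 2 - c ^ 2 ≤ ‖t ^ 2 + (c : ℂ) ^ 2‖ := by
    have h := norm_sub_le_norm_add (t ^ 2) ((c : ℂ) ^ 2)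
    rwa [norm_pow, norm_pow, norm_real, Real.norm_of_nonneg hc] at h
  nlinarith

theorem inv_one_add_le_gammaRatio (hc : 0 ≤ c) (t : ℂ) : (1 + c)⁻¹ ≤ gammaRatio c t := by
  have hs := norm_sub_le_sqrt_norm_sq_add_sq hc t
  rw [gammaRatio, inv_eq_one_div, div_le_div_iff₀ (by positivity) (by positivity)]
  nlinarith [mul_nonneg hc (Real.sqrt_nonneg ‖t ^ 2 + (c : ℂ) ^ 2‖)]

theorem gammaRatio_le_one_add (hc : 0 ≤ c) (t : ℂ) : gammaRatio c t ≤ 1 + c := by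
  have hs := sqrt_norm_sq_add_sq_le_norm_add hc t
  rw [gammaRatio, div_le_iff₀ (by positivity)]
  nlinarith [mul_nonneg hc (norm_nonneg t)]

theorem gammaRatio_I_mul (hc : 0 ≤ c) : gammaRatio c (I * c) = (1 + c)⁻¹ := by
  have hzero : (I * c) ^ 2 + (c : ℂ) ^ 2 = 0 := by
    rw [mul_pow, I_sq]; ring
  simp [gammaRatio, hzero, abs_of_nonneg hc]

theorem gammaRatio_zero (hc : 0 ≤ c) : gammaRatio c 0 = 1 + c := by
  simp [gammaRatio, Real.sqrt_sq hc]

end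

/-- The function γ(t) = (1 + |√(t² + (n−1)²/4)|)/(1 + |t|) on ℂ (the modulus of the
square root is branch-independent, equal to |t² + (n−1)²/4|^{1/2}). Its infimum is
2/(n+1), attained at t = i(n−1)/2, and its supremum is (n+1)/2, attained at t = 0. -/
theorem gamma_inf_sup (n : ℕ) (hn : 2 ≤ n) :
    (∀ t : ℂ,
      2 / ((n : ℝ) + 1) ≤
        (1 + Real.sqrt (‖(t ^ 2 + ((n : ℂ) - 1) ^ 2 / 4)‖)) /
          (1 + ‖t‖)) ∧
    ((1 + Real.sqrt (‖((Complex.I * ((n : ℂ) - 1) / 2) ^ 2 +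
          ((n : ℂ) - 1) ^ 2 / 4)‖)) /
        (1 + ‖(Complex.I * ((n : ℂ) - 1) / 2)‖) = 2 / ((n : ℝ) + 1)) ∧
    (∀ t : ℂ,
      (1 + Real.sqrt (‖(t ^ 2 + ((n : ℂ) - 1) ^ 2 / 4)‖)) /
          (1 + ‖t‖) ≤ ((n : ℝ) + 1) / 2) ∧
    ((1 + Real.sqrt (‖((0 : ℂ) ^ 2 + ((n : ℂ) - 1) ^ 2 / 4)‖)) /
        (1 + ‖(0 : ℂ)‖) = ((n : ℝ) + 1) / 2) := by
  set c : ℝ := ((n : ℝ) - 1) / 2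
  have hc : 0 ≤ c := by
    have : (2 : ℝ) ≤ n := by exact_mod_cast hn
    simp only [c]; linarith
  have hsq : ((n : ℂ) - 1) ^ 2 / 4 = (c : ℂ) ^ 2 := by push_cast [c]; ring
  have hpoint : I * ((n : ℂ) - 1) / 2 = I * c := by push_cast [c]; ring
  have hsup : ((n : ℝ) + 1) / 2 = 1 + c := by simp only [c]; ring
  have hinf : 2 / ((n : ℝ) + 1) = (1 + c)⁻¹ := by rw [← hsup, inv_div]
  rw [hsq, hpoint, hinf, hsup]
  exact ⟨inv_one_add_le_gammaRatio hc, gammaRatio_I_mul hc,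
    gammaRatio_le_one_add hc, gammaRatio_zero hc⟩
end

section
/- Let ρ: ℝ → ℝ be even, nonnegative, with ∫_ℝ ρ = 1 and ∫_ℝ |ν|^{2m+2} ρ(ν) dν < ∞; let m ∈ ℕ, δ > 0. Define Ẽ(t) = H(t − m − 1/2)(t − m − 1/2)^{2m+2} − H(−t − m − 1/2)(−t − m − 1/2)^{2m+2} and ρ_δ(τ) = δρ(δτ). Then for all τ > 0, (ρ_δ * Ẽ)(τ) ≥ (τ − m − 1/2)^{2m+2} − (m + 1/2)^{2m+2} − (2m+2) ∫_ℝ |ν/δ| (m + 1/2 + |ν/δ|)^{2m+1} ρ(ν) dν. -/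
/-!
Write `a = m + 1/2` and `n = 2m + 2`, so that `Ẽ(t) = (t - a)₊ⁿ - (-t - a)₊ⁿ` is odd. Substituting
`s = ν/δ` turns the convolution into `∫ Ẽ(τ - ν/δ) ρ(ν) dν`, and since `ρ` is even the integrand may be
replaced by the average `(Ẽ(τ - w) + Ẽ(τ + w))/2` with `w = ν/δ`. For `τ > 0` this average is at least
`(τ - a)ⁿ - aⁿ - n |w| (a + |w|)ⁿ⁻¹`: when `τ - |w| ≥ a` by convexity of `xⁿ`, and otherwise because
each truncated power that is lost or subtracted is at most `|w| (a + |w|)ⁿ⁻¹` (or `aⁿ` if `τ ≤ a`).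
Integrating against `ρ`, of mass one, gives the bound; the moment hypothesis makes every integrand
integrable.
-/

open Real MeasureTheory

noncomputable def truncPow (a : ℝ) (n : ℕ) (t : ℝ) : ℝ :=
  if a ≤ t then (t - a) ^ n else 0

noncomputable def oddTruncPow (a : ℝ) (n : ℕ) (t : ℝ) : ℝ :=
  truncPow a n t - truncPow a n (-t)

section truncPow

variable {a t : ℝ} {n : ℕ}

theorem truncPow_of_le (h : a ≤ t) : truncPow a n t = (t - a) ^ n := if_pos h

theorem truncPow_of_lt (h : t < a) : truncPow a n t = 0 := if_neg (not_le.2 h)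

theorem truncPow_nonneg : 0 ≤ truncPow a n t := by
  unfold truncPow
  split_ifs with h
  · exact pow_nonneg (sub_nonneg.2 h) n
  · exact le_rfl

theorem truncPow_le_abs_pow (ha : 0 ≤ a) : truncPow a n t ≤ |t| ^ n := by
  unfold truncPow
  split_ifs with h
  · exact pow_le_pow_left₀ (sub_nonneg.2 h) (by linarith [le_abs_self t]) n
  · positivity

theorem abs_oddTruncPow_le (ha : 0 ≤ a) : |oddTruncPow a n t| ≤ |t| ^ n := by
  have h₁ := truncPow_le_abs_pow (n := n) (t := t) ha
  have h₂ := truncPow_le_abs_pow (n := n) (t := -t) ha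
  rw [abs_neg] at h₂
  rw [oddTruncPow, abs_le]
  constructor <;> linarith [truncPow_nonneg (a := a) (n := n) (t := t),
    truncPow_nonneg (a := a) (n := n) (t := -t)]

theorem measurable_truncPow (a : ℝ) (n : ℕ) : Measurable (truncPow a n) :=
  Measurable.ite (measurableSet_le measurable_const measurable_id) (by fun_prop) measurable_const

theorem measurable_oddTruncPow (a : ℝ) (n : ℕ) : Measurable (oddTruncPow a n) :=
  (measurable_truncPow a n).sub ((measurable_truncPow a n).comp measurable_neg)

theorem truncPow_succ_le_mul_pow {w : ℝ} (k : ℕ) (ha : 0 ≤ a) (hw : 0 ≤ w) (ht : t ≤ a + w) :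
    truncPow a (k + 1) t ≤ w * (a + w) ^ k := by
  rcases lt_or_ge t a with h | h
  · rw [truncPow_of_lt h]
    positivity
  · rw [truncPow_of_le h, pow_succ']
    exact mul_le_mul (by linarith) (pow_le_pow_left₀ (by linarith) (by linarith) k)
      (by positivity) hw

end truncPow

section PointwiseBound

variable {a τ : ℝ} (k : ℕ)

theorem pow_sub_sub_le_truncPow_add (hτ : 0 ≤ τ) (ha : 0 ≤ a) {w : ℝ} (hw : 0 ≤ w) :
    (τ - a) ^ (2 * k + 2) - a ^ (2 * k + 2) - w * (a + w) ^ (2 * k + 1)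
      ≤ (truncPow a (2 * k + 2) (τ - w) + truncPow a (2 * k + 2) (τ + w)) / 2 := by
  have heven : Even (2 * k + 2) := ⟨k + 1, by ring⟩
  have h₁ : 0 ≤ truncPow a (2 * k + 2) (τ - w) := truncPow_nonneg
  have h₂ : 0 ≤ truncPow a (2 * k + 2) (τ + w) := truncPow_nonneg
  have hX : 0 ≤ w * (a + w) ^ (2 * k + 1) := by positivity
  rcases le_or_gt τ a with hτa | hτa
  · have : (τ - a) ^ (2 * k + 2) ≤ a ^ (2 * k + 2) := by
      rw [← heven.pow_abs]
      exact pow_le_pow_left₀ (abs_nonneg _) (by rw [abs_le]; constructor <;> linarith) _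
    linarith
  rcases le_or_gt a (τ - w) with hwa | hwa
  · have hconv := heven.convexOn_pow.2 (Set.mem_univ (τ - w - a)) (Set.mem_univ (τ + w - a))
      (by norm_num : (0 : ℝ) ≤ 1 / 2) (by norm_num : (0 : ℝ) ≤ 1 / 2) (by norm_num)
    simp only [smul_eq_mul] at hconv
    rw [show (1 / 2 : ℝ) * (τ - w - a) + 1 / 2 * (τ + w - a) = τ - a by ring] at hconv
    rw [truncPow_of_le hwa, truncPow_of_le (by linarith)]
    linarith [pow_nonneg ha (2 * k + 2)]
  · have : (τ - a) ^ (2 * k + 2) ≤ w * (a + w) ^ (2 * k + 1) := by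
      rw [← truncPow_of_le hτa.le]
      exact truncPow_succ_le_mul_pow _ ha hw (by linarith)
    linarith [pow_nonneg ha (2 * k + 2)]

theorem pow_sub_sub_le_oddTruncPow_add_of_nonneg (hτ : 0 < τ) (ha : 0 ≤ a) {w : ℝ} (hw : 0 ≤ w) :
    (τ - a) ^ (2 * k + 2) - a ^ (2 * k + 2) - (2 * k + 2) * (w * (a + w) ^ (2 * k + 1))
      ≤ (oddTruncPow a (2 * k + 2) (τ - w) + oddTruncPow a (2 * k + 2) (τ + w)) / 2 := by
  have hX : 0 ≤ w * (a + w) ^ (2 * k + 1) := by positivity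
  have hleft : truncPow a (2 * k + 2) (-(τ - w)) ≤ w * (a + w) ^ (2 * k + 1) :=
    truncPow_succ_le_mul_pow _ ha hw (by linarith)
  have hright : truncPow a (2 * k + 2) (-(τ + w)) = 0 := truncPow_of_lt (by linarith)
  have := pow_sub_sub_le_truncPow_add k hτ.le ha hw
  rw [oddTruncPow, oddTruncPow, hright]
  linarith [mul_nonneg (by positivity : (0 : ℝ) ≤ 2 * k) hX]

theorem pow_sub_sub_le_oddTruncPow_add (hτ : 0 < τ) (ha : 0 ≤ a) (w : ℝ) :
    (τ - a) ^ (2 * k + 2) - a ^ (2 * k + 2) - (2 * k + 2) * (|w| * (a + |w|) ^ (2 * k + 1))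
      ≤ (oddTruncPow a (2 * k + 2) (τ - w) + oddTruncPow a (2 * k + 2) (τ + w)) / 2 := by
  rcases le_total 0 w with hw | hw
  · rw [abs_of_nonneg hw]
    exact pow_sub_sub_le_oddTruncPow_add_of_nonneg k hτ ha hw
  · rw [abs_of_nonpos hw, add_comm (oddTruncPow _ _ _)]
    simpa only [sub_neg_eq_add, ← sub_eq_add_neg] using
      pow_sub_sub_le_oddTruncPow_add_of_nonneg k hτ ha (neg_nonneg.2 hw)

end PointwiseBound

section Integration

variable {ρ f : ℝ → ℝ}

theorem integrable_mul_of_abs_le_add_mul_abs_pow {n : ℕ} {b c : ℝ} (hρ : Integrable ρ)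
    (hmom : Integrable fun x => |x| ^ n * ρ x) (hb : 0 ≤ b) (hc : 0 ≤ c)
    (hf : AEStronglyMeasurable f) (hfb : ∀ x, |f x| ≤ (c + b * |x|) ^ n) :
    Integrable fun x => f x * ρ x := by
  refine ((hρ.abs.const_mul (2 ^ (n - 1) * c ^ n)).add
    (hmom.abs.const_mul (2 ^ (n - 1) * b ^ n))).mono' (hf.mul hρ.1) (.of_forall fun x => ?_)
  have hpow : (c + b * |x|) ^ n ≤ 2 ^ (n - 1) * (c ^ n + b ^ n * |x| ^ n) := by
    rw [← mul_pow]
    exact add_pow_le hc (by positivity) n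
  calc ‖f x * ρ x‖ = |f x| * |ρ x| := abs_mul _ _
    _ ≤ 2 ^ (n - 1) * (c ^ n + b ^ n * |x| ^ n) * |ρ x| :=
      mul_le_mul_of_nonneg_right ((hfb x).trans hpow) (abs_nonneg _)
    _ = 2 ^ (n - 1) * c ^ n * |ρ x| + 2 ^ (n - 1) * b ^ n * |(|x| ^ n * ρ x)| := by
      rw [abs_mul, abs_of_nonneg (by positivity : (0 : ℝ) ≤ |x| ^ n)]
      ring

theorem abs_div_eq_inv_mul_abs {δ : ℝ} (hδ : 0 < δ) (x : ℝ) : |x / δ| = δ⁻¹ * |x| := by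
  rw [abs_div, abs_of_pos hδ, div_eq_inv_mul]

theorem integrable_oddTruncPow_sub_div_mul {n : ℕ} {a δ : ℝ} (hρ : Integrable ρ)
    (hmom : Integrable fun x => |x| ^ n * ρ x) (ha : 0 ≤ a) (hδ : 0 < δ) (τ : ℝ) :
    Integrable fun x => oddTruncPow a n (τ - x / δ) * ρ x := by
  refine integrable_mul_of_abs_le_add_mul_abs_pow hρ hmom (inv_nonneg.2 hδ.le) (abs_nonneg τ)
    ((measurable_oddTruncPow a n).comp (by fun_prop)).aestronglyMeasurable fun x => ?_
  rw [← abs_div_eq_inv_mul_abs hδ]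
  exact (abs_oddTruncPow_le ha).trans (pow_le_pow_left₀ (abs_nonneg _) (abs_sub _ _) n)

theorem integrable_abs_div_mul_add_abs_div_pow_mul {n : ℕ} {a δ : ℝ} (hρ : Integrable ρ)
    (hmom : Integrable fun x => |x| ^ (n + 1) * ρ x) (ha : 0 ≤ a) (hδ : 0 < δ) :
    Integrable fun x => |x / δ| * (a + |x / δ|) ^ n * ρ x := by
  refine integrable_mul_of_abs_le_add_mul_abs_pow hρ hmom (inv_nonneg.2 hδ.le) ha
    (by fun_prop) fun x => ?_
  rw [abs_of_nonneg (by positivity), ← abs_div_eq_inv_mul_abs hδ, pow_succ']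
  exact mul_le_mul_of_nonneg_right (by linarith) (by positivity)

theorem integral_mul_comp_mul_left {δ : ℝ} (hδ : 0 < δ) :
    ∫ s, f s * (δ * ρ (δ * s)) = ∫ x, f (x / δ) * ρ x := by
  have h := Measure.integral_comp_mul_left (fun x => f (x / δ) * ρ x) δ
  simp only [mul_div_cancel_left₀ _ hδ.ne', smul_eq_mul, abs_of_pos (inv_pos.2 hδ)] at h
  rw [← mul_inv_cancel_left₀ hδ.ne' (∫ x, f (x / δ) * ρ x), ← h, ← integral_const_mul]
  congr 1 with s
  ring

theorem MeasureTheory.Integrable.comp_neg_mul_of_even (hρ : ∀ x, ρ (-x) = ρ x)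
    (hf : Integrable fun x => f x * ρ x) : Integrable fun x => f (-x) * ρ x := by
  simpa only [hρ] using hf.comp_neg

theorem integral_mul_of_even_eq_integral_average (hρ : ∀ x, ρ (-x) = ρ x)
    (hf : Integrable fun x => f x * ρ x) :
    ∫ x, f x * ρ x = ∫ x, (f x * ρ x + f (-x) * ρ x) / 2 := by
  have hreflect : ∫ x, f (-x) * ρ x = ∫ x, f x * ρ x := by
    simpa only [hρ] using integral_neg_eq_self (fun x => f x * ρ x) volume
  rw [integral_div, integral_add hf (hf.comp_neg_mul_of_even hρ), hreflect]
  ring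

end Integration

/-- Even-dimensional Fourier–Tauberian convolution lower bound. -/
theorem conv_lower_bound_even (m : ℕ) (δ : ℝ) (hδ : 0 < δ)
    (ρ : ℝ → ℝ) (hρ_even : ∀ t, ρ (-t) = ρ t) (hρ_nonneg : ∀ t, 0 ≤ ρ t)
    (hρ_int : ∫ t : ℝ, ρ t = 1)
    (hρ_moment : Integrable (fun ν : ℝ => |ν| ^ (2 * m + 2) * ρ ν))
    (Etil : ℝ → ℝ)
    (hE : ∀ t : ℝ, Etil t =
      (if (m : ℝ) + 1/2 ≤ t then (t - m - 1/2) ^ (2 * m + 2) else 0) -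
      (if (m : ℝ) + 1/2 ≤ -t then (-t - m - 1/2) ^ (2 * m + 2) else 0)) :
    ∀ τ : ℝ, 0 < τ →
      (τ - m - 1/2) ^ (2 * m + 2) - ((m : ℝ) + 1/2) ^ (2 * m + 2) -
          (2 * m + 2) * ∫ ν : ℝ, |ν / δ| * ((m : ℝ) + 1/2 + |ν / δ|) ^ (2 * m + 1) * ρ ν
        ≤ ∫ s : ℝ, Etil (τ - s) * (δ * ρ (δ * s)) := by
  intro τ hτ
  set a : ℝ := (m : ℝ) + 1 / 2 with ha_def
  have ha : 0 ≤ a := by positivity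
  have hEtil : Etil = oddTruncPow a (2 * m + 2) := by
    ext t
    simp only [hE, oddTruncPow, truncPow, a, sub_add_eq_sub_sub]
  have hρI : Integrable ρ := integrable_of_integral_eq_one hρ_int
  have hG := integrable_abs_div_mul_add_abs_div_pow_mul (n := 2 * m + 1) hρI hρ_moment ha hδ
  have hF := integrable_oddTruncPow_sub_div_mul hρI hρ_moment ha hδ τ
  calc (τ - m - 1/2) ^ (2 * m + 2) - a ^ (2 * m + 2) -
          (2 * m + 2) * ∫ ν : ℝ, |ν / δ| * (a + |ν / δ|) ^ (2 * m + 1) * ρ ν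
      = ∫ ν, ((τ - a) ^ (2 * m + 2) - a ^ (2 * m + 2)) * ρ ν
          - (2 * m + 2) * (|ν / δ| * (a + |ν / δ|) ^ (2 * m + 1) * ρ ν) := by
        rw [integral_sub (hρI.const_mul _) (hG.const_mul _), integral_const_mul,
          integral_const_mul, hρ_int, ha_def]
        ring
    _ ≤ ∫ ν, (oddTruncPow a (2 * m + 2) (τ - ν / δ) * ρ ν
          + oddTruncPow a (2 * m + 2) (τ - -ν / δ) * ρ ν) / 2 := by
        refine integral_mono ((hρI.const_mul _).sub (hG.const_mul _))
          ((hF.add (hF.comp_neg_mul_of_even hρ_even)).div_const 2) fun ν => ?_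
        have key := pow_sub_sub_le_oddTruncPow_add m hτ ha (ν / δ)
        rw [neg_div, sub_neg_eq_add]
        linarith [mul_le_mul_of_nonneg_right key (hρ_nonneg ν)]
    _ = ∫ s, Etil (τ - s) * (δ * ρ (δ * s)) := by
        rw [← integral_mul_of_even_eq_integral_average hρ_even hF, hEtil,
          integral_mul_comp_mul_left hδ]
end
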